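/- For all sequences S, T ∈ Σ^∞, mdim_FS(S:T) ≤ min{dim_FS(S), dim_FS(T)}. -/

import Mathlib

open Filter Real

/-- A finite-state compressor on alphabet `Γ`. -/
structure FSC (Γ : Type) where
  Q : Type
  fin : Fintype Q
  δ : Q → Γ → Q
  ν : Q → Γ → List Bool
  q0 : Q

attribute [instance] FSC.fin

/-- Extended transition function, starting from state `q`. -/
def FSC.runFrom {Γ : Type} (C : FSC Γ) : C.Q → List Γ → C.Q
  | q, [] => q
  | q, a :: u => C.runFrom (C.δ q a) u

/-- Output of the compressor started in state `q`. -/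
def FSC.outFrom {Γ : Type} (C : FSC Γ) : C.Q → List Γ → List Bool
  | _, [] => []
  | q, a :: u => C.ν q a ++ C.outFrom (C.δ q a) u

/-- Output of the compressor on input `u` (from the initial state). -/
def FSC.output {Γ : Type} (C : FSC Γ) (u : List Γ) : List Bool := C.outFrom C.q0 u

/-- Information-losslessness: `u ↦ (C(u), δ*(q₀,u))` is injective. -/
def FSC.IL {Γ : Type} (C : FSC Γ) : Prop :=
  Function.Injective fun u : List Γ => (C.output u, C.runFrom C.q0 u)

/-- Number of states. -/
def FSC.states {Γ : Type} (C : FSC Γ) : ℕ := Fintype.card C.Q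

/-- `L_C(w)`: the minimum over all states `q` of the output length of `C` started at `q`. -/
noncomputable def FSC.L {Γ : Type} (C : FSC Γ) (w : List Γ) : ℕ :=
  haveI : Nonempty C.Q := ⟨C.q0⟩
  Finset.univ.inf' Finset.univ_nonempty fun q => (C.outFrom q w).length

/-- Compression ratio of `u` attained by `C`, over an alphabet of size `k`. -/
noncomputable def compRatio (k : ℕ) {Γ : Type} (C : FSC Γ) (u : List Γ) : ℝ :=
  ((C.output u).length : ℝ) / (u.length * Real.logb 2 k)

/-- `ρ_t(u)`: the `t`-state compression ratio of `u`, a minimum over all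
information-lossless finite-state compressors on `k` with `t` states. -/
noncomputable def rhoFS (k : Type) [Fintype k] (t : ℕ) (u : List k) : ℝ :=
  sInf {x : ℝ | ∃ C : FSC k, C.IL ∧ C.states = t ∧
    x = ((C.output u).length : ℝ) / (u.length * Real.logb 2 (Fintype.card k))}

/-- `ρ_r(u,w)`: the `r`-state joint compression ratio of `u` and `w`. -/
noncomputable def rhoFSJoint (k : Type) [Fintype k] (r : ℕ) (u w : List k) : ℝ :=
  sInf {x : ℝ | ∃ C : FSC (k × k), C.IL ∧ C.states = r ∧
    x = ((C.output (u.zip w)).length : ℝ) / (u.length * Real.logb 2 (Fintype.card k))}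

/-- `ρ_{r,t}(u:w)`: the `r,t`-state mutual compression ratio between `u` and `w`. -/
noncomputable def rhoFSMutual (k : Type) [Fintype k] (r t : ℕ) (u w : List k) : ℝ :=
  rhoFS k t u + rhoFS k t w - rhoFSJoint k r u w

/-- The prefix of length `n` of a sequence, as a list. -/
def pre {k : Type} (S : ℕ → k) (n : ℕ) : List k := List.ofFn fun i : Fin n => S i

/-- Lower finite-state dimension of a sequence (compressor characterization). -/
noncomputable def dimFS (k : Type) [Fintype k] (S : ℕ → k) : ℝ :=
  limUnder Filter.atTop fun t =>
    Filter.atTop.liminf fun n => rhoFS k t (pre S n)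

/-- Lower finite-state mutual dimension between two sequences. -/
noncomputable def mdimFS (k : Type) [Fintype k] (S T : ℕ → k) : ℝ :=
  limUnder Filter.atTop fun r =>
    limUnder Filter.atTop fun t =>
      Filter.atTop.liminf fun n => rhoFSMutual k r t (pre S n) (pre T n)

/-- Upper finite-state mutual dimension between two sequences. -/
noncomputable def MdimFS (k : Type) [Fintype k] (S T : ℕ → k) : ℝ :=
  limUnder Filter.atTop fun r =>
    limUnder Filter.atTop fun t =>
      Filter.atTop.limsup fun n => rhoFSMutual k r t (pre S n) (pre T n)

/-!
Compression ratios are compared with the empirical entropy `H_m` of the aligned length-`m` blocks.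
Shannon–Fano coding of the blocks, run by a compressor whose states are the incomplete blocks,
comes within two bits per block of `H_m`. Conversely, Gibbs' inequality together with a
Kraft-type count of block outputs shows that an IL compressor with `r` states cannot beat `H_m`
by more than `logb 2 (m (|Γ| + 1) r²)` bits per block. Projecting `u.zip w` to `u` or to `w`
does not increase block entropy, so once `t` exceeds the number of states of the block coder,
`ρ_t(u) + ρ_t(w) - ρ_r(u, w) ≤ min (ρ_t(u), ρ_t(w)) + O(log m / m)`. Taking `liminf` in `n`
and letting `t → ∞` bounds the `r`-th approximant of `mdim_FS(S : T)` by
`min (dim_FS(S), dim_FS(T)) + O(log m / m)` for every `m`; let `m → ∞`, then `r → ∞`.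
-/

open Finset Filter Topology

lemma logb_two_le_sub_one_div {x : ℝ} (hx : 0 < x) : logb 2 x ≤ (x - 1) / log 2 :=
  div_le_div_of_nonneg_right (log_le_sub_one_of_pos hx) (log_pos one_lt_two).le

section FiberEntropy

variable {ι κ : Type*} [DecidableEq κ]

/-- `#s` times the entropy, in bits, of the distribution of `key i` for `i` uniform on `s`. -/
noncomputable def fiberEntropy (s : Finset ι) (key : ι → κ) : ℝ :=
  ∑ i ∈ s, logb 2 (#s / #{j ∈ s | key j = key i})

lemma card_fiber_pos {s : Finset ι} {key : ι → κ} {i : ι} (hi : i ∈ s) :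
    0 < #{j ∈ s | key j = key i} :=
  card_pos.2 ⟨i, mem_filter.2 ⟨hi, rfl⟩⟩

lemma sum_div_card_fiber (s : Finset ι) (key : ι → κ) (f : κ → ℝ) :
    ∑ i ∈ s, f (key i) / #{j ∈ s | key j = key i} = ∑ x ∈ s.image key, f x := by
  refine (sum_image' _ fun i hi => ?_).symm
  have hfiber : ∀ j ∈ {j ∈ s | key j = key i},
      f (key j) / #{l ∈ s | key l = key j} = f (key i) / #{j ∈ s | key j = key i} :=
    fun j hj => by rw [(mem_filter.1 hj).2]
  rw [sum_congr rfl hfiber, sum_const, nsmul_eq_mul,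
    mul_div_cancel₀ _ (Nat.cast_ne_zero.2 (card_fiber_pos hi).ne')]

lemma fiberEntropy_le_of_factors {κ' : Type*} [DecidableEq κ'] (s : Finset ι)
    (f : ι → κ) (g : ι → κ') (h : ∀ i ∈ s, ∀ j ∈ s, g j = g i → f j = f i) :
    fiberEntropy s f ≤ fiberEntropy s g := by
  refine sum_le_sum fun i hi => ?_
  have hsub : {j ∈ s | g j = g i} ⊆ {j ∈ s | f j = f i} := fun j hj => by
    rw [mem_filter] at hj ⊢
    exact ⟨hj.1, h i hi j hj.1 hj.2⟩
  have hs : (0 : ℝ) < #s := Nat.cast_pos.2 (card_pos.2 ⟨i, hi⟩)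
  refine logb_le_logb_of_le one_lt_two (div_pos hs (Nat.cast_pos.2 (card_fiber_pos hi))) ?_
  have := card_fiber_pos (key := g) hi
  gcongr

/-- Gibbs' inequality: the entropy is at most the mean length `logb 2 (q x)⁻¹` of any code
whose Kraft sum `∑ q` is at most `A`, up to `logb 2 A` per element. -/
lemma fiberEntropy_le (s : Finset ι) (key : ι → κ) (q : κ → ℝ) {A : ℝ}
    (hq : ∀ i ∈ s, 0 < q (key i)) (hA : ∑ x ∈ s.image key, q x ≤ A) :
    fiberEntropy s key ≤ ∑ i ∈ s, logb 2 (q (key i))⁻¹ + #s * logb 2 A := by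
  rcases s.eq_empty_or_nonempty with rfl | hs
  · simp [fiberEntropy]
  have hApos : 0 < A := (sum_pos (fun x hx => by
    obtain ⟨i, hi, rfl⟩ := mem_image.1 hx; exact hq i hi) (hs.image key)).trans_le hA
  set n : ℝ := ((#s : ℕ) : ℝ)
  set c : ι → ℝ := fun i => ((#{j ∈ s | key j = key i} : ℕ) : ℝ)
  have hn : 0 < n := Nat.cast_pos.2 hs.card_pos
  have hterm : ∀ i ∈ s, logb 2 (n / c i) - logb 2 (q (key i))⁻¹ - logb 2 A
      ≤ (n * (q (key i) / c i) / A - 1) / log 2 := by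
    intro i hi
    have hci : 0 < c i := Nat.cast_pos.2 (card_fiber_pos hi)
    have hqi := hq i hi
    convert logb_two_le_sub_one_div (x := n * (q (key i) / c i) / A) (by positivity) using 1
    rw [logb_inv, logb_div (by positivity) hApos.ne', logb_mul hn.ne' (by positivity),
      logb_div hn.ne' hci.ne', logb_div hqi.ne' hci.ne']
    ring
  have hsum : ∑ i ∈ s, (n * (q (key i) / c i) / A - 1) / log 2 ≤ 0 := by
    rw [← sum_div, sum_sub_distrib, ← sum_div, ← mul_sum, sum_div_card_fiber, sum_const,
      nsmul_one]
    apply div_nonpos_of_nonpos_of_nonneg _ (log_pos one_lt_two).le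
    rw [sub_nonpos, div_le_iff₀ hApos]
    exact mul_le_mul_of_nonneg_left hA hn.le
  have := (sum_le_sum hterm).trans hsum
  rw [sum_sub_distrib, sum_sub_distrib, sum_const, nsmul_eq_mul] at this
  unfold fiberEntropy
  linarith

end FiberEntropy

section Blocks

variable {Γ : Type*}

def block (m : ℕ) (z : List Γ) (i : ℕ) : List Γ := (z.drop (i * m)).take m

noncomputable def blockEntropy [DecidableEq Γ] (m : ℕ) (z : List Γ) : ℝ :=
  fiberEntropy (range (z.length / m)) (block m z)

lemma length_block {m : ℕ} {z : List Γ} {i : ℕ} (hi : i < z.length / m) :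
    (block m z i).length = m := by
  have hm : 0 < m := Nat.pos_of_ne_zero (by rintro rfl; simp at hi)
  have : (i + 1) * m ≤ z.length := (Nat.le_div_iff_mul_le hm).1 hi
  rw [add_one_mul] at this
  simp only [block, List.length_take, List.length_drop]
  omega

lemma take_add_one_mul (m : ℕ) (z : List Γ) (i : ℕ) :
    z.take ((i + 1) * m) = z.take (i * m) ++ block m z i := by
  rw [add_one_mul, List.take_add]
  rfl

lemma take_mul_eq_flatten (m : ℕ) (z : List Γ) (i : ℕ) :
    z.take (i * m) = ((List.range i).map (block m z)).flatten := by
  induction i with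
  | zero => simp
  | succ i ih => rw [take_add_one_mul, ih, List.range_succ]; simp

lemma block_map {Δ : Type*} (f : Γ → Δ) (m : ℕ) (z : List Γ) (i : ℕ) :
    block m (z.map f) i = (block m z i).map f := by
  simp only [block, List.map_drop, List.map_take]

lemma blockEntropy_map_le {Δ : Type*} [DecidableEq Γ] [DecidableEq Δ] (f : Γ → Δ) (m : ℕ)
    (z : List Γ) : blockEntropy m (z.map f) ≤ blockEntropy m z := by
  unfold blockEntropy
  rw [List.length_map]
  refine fiberEntropy_le_of_factors _ _ _ fun i _ j _ h => ?_
  rw [block_map, block_map, h]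

end Blocks

def wordsOfLength (Γ : Type*) [Fintype Γ] (n : ℕ) : Finset (List Γ) :=
  (univ : Finset (List.Vector Γ n)).map ⟨List.Vector.toList, List.Vector.toList_injective⟩

lemma mem_wordsOfLength {Γ : Type*} [Fintype Γ] {n : ℕ} {l : List Γ} :
    l ∈ wordsOfLength Γ n ↔ l.length = n := by
  simp only [wordsOfLength, Finset.mem_map, mem_univ, true_and, Function.Embedding.coeFn_mk]
  exact ⟨fun ⟨v, hv⟩ => hv ▸ v.toList_length, fun h => ⟨⟨l, h⟩, rfl⟩⟩

lemma card_wordsOfLength (Γ : Type*) [Fintype Γ] (n : ℕ) :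
    #(wordsOfLength Γ n) = Fintype.card Γ ^ n := by
  rw [wordsOfLength, card_map, card_univ, card_vector]

lemma pow_le_two_pow_mul (G m : ℕ) : G ^ m ≤ 2 ^ (m * G) := by
  rw [mul_comm, pow_mul]
  exact Nat.pow_le_pow_left Nat.lt_two_pow_self.le m

lemma eq_of_flatten_map_eq {α β : Type*} {s : Set α} {code : α → List β}
    (hne : ∀ a ∈ s, code a ≠ []) (hpre : ∀ a ∈ s, ∀ b ∈ s, code a <+: code b → a = b) :
    ∀ {as bs : List α}, (∀ a ∈ as, a ∈ s) → (∀ b ∈ bs, b ∈ s) →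
      (as.map code).flatten = (bs.map code).flatten → as = bs
  | [], [], _, _, _ => rfl
  | [], b :: _, _, hbs, h => by
    simp only [List.map_nil, List.flatten_nil, List.map_cons, List.flatten_cons,
      List.nil_eq_append_iff] at h
    exact absurd h.1 (hne b (hbs b List.mem_cons_self))
  | a :: _, [], has, _, h => by
    simp only [List.map_nil, List.flatten_nil, List.map_cons, List.flatten_cons,
      List.append_eq_nil_iff] at h
    exact absurd h.1 (hne a (has a List.mem_cons_self))
  | a :: as, b :: bs, has, hbs, h => by
    simp only [List.map_cons, List.flatten_cons] at h
    have ha := has a List.mem_cons_self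
    have hb := hbs b List.mem_cons_self
    obtain rfl : a = b := by
      rcases List.prefix_or_prefix_of_prefix (List.prefix_append _ _) (h ▸ List.prefix_append _ _)
        with hba | hab
      · exact (hpre b hb a ha hba).symm
      · exact hpre a ha b hb hab
    rw [eq_of_flatten_map_eq hne hpre (fun x hx => has x (List.mem_cons_of_mem _ hx))
      (fun x hx => hbs x (List.mem_cons_of_mem _ hx)) (List.append_cancel_left h)]

/-- `c` written with `ℓ` binary digits, most significant first. -/
def bits (ℓ c : ℕ) : List Bool := List.ofFn fun b : Fin ℓ => c.testBit (ℓ - 1 - b)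

lemma length_bits (ℓ c : ℕ) : (bits ℓ c).length = ℓ := List.length_ofFn

lemma div_two_pow_eq_of_bits_prefix {ℓ ℓ' c c' : ℕ} (hc : c < 2 ^ ℓ) (hc' : c' < 2 ^ ℓ')
    (h : bits ℓ c <+: bits ℓ' c') : c' / 2 ^ (ℓ' - ℓ) = c := by
  have hℓ : ℓ ≤ ℓ' := by simpa [length_bits] using h.length_le
  have hbit : ∀ p < ℓ, c.testBit (ℓ - 1 - p) = c'.testBit (ℓ' - 1 - p) := fun p hp => by
    simpa [bits] using h.getElem (by simpa [length_bits] using hp)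
  rw [← Nat.shiftRight_eq_div_pow]
  refine Nat.eq_of_testBit_eq fun b => ?_
  rw [Nat.testBit_shiftRight]
  by_cases hb : b < ℓ
  · have := hbit (ℓ - 1 - b) (by omega)
    rw [show ℓ - 1 - (ℓ - 1 - b) = b by omega,
      show ℓ' - 1 - (ℓ - 1 - b) = ℓ' - ℓ + b by omega] at this
    exact this.symm
  · rw [Nat.testBit_lt_two_pow (hc.trans_le (Nat.pow_le_pow_right two_pos (by omega))),
      Nat.testBit_lt_two_pow (hc'.trans_le (Nat.pow_le_pow_right two_pos (by omega)))]

section Kraft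

variable {α β : Type*} [LinearOrder β] (s : Finset α) (key : α → β) (ℓ : α → ℕ)

/-- The Kraft numerator of `a`: listing `s` by increasing `key`, the codeword of `a` is the
left end `kraftNum / 2 ^ ℓ a` of the next free dyadic interval of length `2 ^ (-ℓ a)`. -/
noncomputable def kraftNum (a : α) : ℕ := ∑ b ∈ s with key b < key a, 2 ^ (ℓ a - ℓ b)

variable {s key ℓ}

lemma kraftNum_lt (hℓ : ∀ a b, key a < key b → ℓ a ≤ ℓ b)
    (h : ∑ a ∈ s, ((2 : ℝ) ^ ℓ a)⁻¹ ≤ 1) {a : α} (ha : a ∈ s) :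
    kraftNum s key ℓ a < 2 ^ ℓ a := by
  classical
  set P := {b ∈ s | key b < key a}
  have hsum : ∑ b ∈ insert a P, ((2 : ℝ) ^ ℓ b)⁻¹ ≤ 1 :=
    (sum_le_sum_of_subset_of_nonneg (insert_subset ha (filter_subset _ _))
      fun _ _ _ => by positivity).trans h
  have hnum : (kraftNum s key ℓ a + 1 : ℝ) = 2 ^ ℓ a * ∑ b ∈ insert a P, ((2 : ℝ) ^ ℓ b)⁻¹ := by
    rw [sum_insert (by simp [P]), mul_add, mul_inv_cancel₀ (by positivity), kraftNum,
      Nat.cast_sum, mul_sum, add_comm]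
    congr 1
    refine sum_congr rfl fun b hb => ?_
    rw [Nat.cast_pow, Nat.cast_ofNat, pow_sub₀ _ two_ne_zero (hℓ _ _ (mem_filter.1 hb).2)]
  have : (kraftNum s key ℓ a + 1 : ℝ) ≤ 2 ^ ℓ a :=
    hnum ▸ mul_le_of_le_one_right (by positivity) hsum
  exact_mod_cast (lt_add_one _).trans_le this

lemma two_pow_mul_kraftNum_add_one_le (hℓ : ∀ a b, key a < key b → ℓ a ≤ ℓ b)
    {a b : α} (ha : a ∈ s) (hab : key a < key b) :
    2 ^ (ℓ b - ℓ a) * (kraftNum s key ℓ a + 1) ≤ kraftNum s key ℓ b := by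
  classical
  have hsub : insert a {x ∈ s | key x < key a} ⊆ {x ∈ s | key x < key b} :=
    insert_subset (mem_filter.2 ⟨ha, hab⟩) fun x hx => by
      rw [mem_filter] at hx ⊢
      exact ⟨hx.1, hx.2.trans hab⟩
  calc 2 ^ (ℓ b - ℓ a) * (kraftNum s key ℓ a + 1)
      = ∑ x ∈ insert a {x ∈ s | key x < key a}, 2 ^ (ℓ b - ℓ x) := by
        rw [sum_insert (by simp), kraftNum, mul_add_one, mul_sum, add_comm]
        congr 1
        refine sum_congr rfl fun x hx => ?_
        have := hℓ _ _ (mem_filter.1 hx).2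
        have := hℓ _ _ hab
        rw [← pow_add]
        congr 1
        omega
    _ ≤ kraftNum s key ℓ b := sum_le_sum_of_subset hsub

/-- The converse of Kraft's inequality. -/
theorem exists_prefixFree_code (s : Finset α) (ℓ : α → ℕ) (h : ∑ a ∈ s, ((2 : ℝ) ^ ℓ a)⁻¹ ≤ 1) :
    ∃ code : α → List Bool, (∀ a, (code a).length = ℓ a) ∧
      ∀ a ∈ s, ∀ b ∈ s, code a <+: code b → a = b := by
  let _ : LinearOrder α := IsWellOrder.linearOrder WellOrderingRel
  let key : α → ℕ ×ₗ α := fun a => toLex (ℓ a, a)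
  have hℓ : ∀ a b, key a < key b → ℓ a ≤ ℓ b := fun a b hab => by
    rcases Prod.Lex.lt_iff.1 hab with h | h
    exacts [h.le, h.1.le]
  have hkey : ∀ a b, key a = key b → a = b := fun a b hab => congrArg Prod.snd hab
  refine ⟨fun a => bits (ℓ a) (kraftNum s key ℓ a), fun a => length_bits _ _,
    fun a ha b hb hpre => ?_⟩
  have hdiv := div_two_pow_eq_of_bits_prefix (kraftNum_lt hℓ h ha) (kraftNum_lt hℓ h hb) hpre
  rcases lt_trichotomy (key a) (key b) with hab | hab | hab
  · have := two_pow_mul_kraftNum_add_one_le hℓ ha hab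
    rw [mul_comm, ← Nat.le_div_iff_mul_le (by positivity), hdiv] at this
    omega
  · exact hkey a b hab
  · have hba := two_pow_mul_kraftNum_add_one_le hℓ hb hab
    have : ℓ a = ℓ b := le_antisymm (by simpa [length_bits] using hpre.length_le) (hℓ _ _ hab)
    rw [this, Nat.sub_self, pow_zero, Nat.div_one] at hdiv
    rw [this, Nat.sub_self, pow_zero, one_mul] at hba
    omega

end Kraft

namespace FSC

variable {Γ : Type} (C : FSC Γ)

lemma runFrom_append (q : C.Q) (x y : List Γ) :
    C.runFrom q (x ++ y) = C.runFrom (C.runFrom q x) y := by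
  induction x generalizing q with
  | nil => rfl
  | cons a x ih => exact ih _

lemma outFrom_append (q : C.Q) (x y : List Γ) :
    C.outFrom q (x ++ y) = C.outFrom q x ++ C.outFrom (C.runFrom q x) y := by
  induction x generalizing q with
  | nil => rfl
  | cons a x ih => simp [outFrom, runFrom, ih]

lemma one_le_states : 1 ≤ C.states := Fintype.card_pos_iff.2 ⟨C.q0⟩

variable {C}

lemma IL.eq_of_outFrom_eq (h : C.IL) (p : List Γ) {x y : List Γ}
    (hout : C.outFrom (C.runFrom C.q0 p) x = C.outFrom (C.runFrom C.q0 p) y)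
    (hrun : C.runFrom (C.runFrom C.q0 p) x = C.runFrom (C.runFrom C.q0 p) y) : x = y :=
  List.append_cancel_left <| @h (p ++ x) (p ++ y) <| by
    simp only [output, outFrom_append, runFrom_append, hout, hrun]

variable (C)

def pad (j : ℕ) : FSC Γ where
  Q := C.Q ⊕ Fin j
  fin := inferInstance
  δ q a := .inl (C.δ (q.elim id fun _ => C.q0) a)
  ν q a := q.elim (C.ν · a) fun _ => []
  q0 := .inl C.q0

lemma pad_runFrom (j : ℕ) (q : C.Q) (u : List Γ) :
    (C.pad j).runFrom (.inl q) u = .inl (C.runFrom q u) := by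
  induction u generalizing q with
  | nil => rfl
  | cons a u ih => exact ih _

lemma pad_outFrom (j : ℕ) (q : C.Q) (u : List Γ) :
    (C.pad j).outFrom (.inl q) u = C.outFrom q u := by
  induction u generalizing q with
  | nil => rfl
  | cons a u ih => exact congrArg (C.ν q a ++ ·) (ih _)

lemma pad_output (j : ℕ) (u : List Γ) : (C.pad j).output u = C.output u :=
  C.pad_outFrom j _ u

lemma pad_states (j : ℕ) : (C.pad j).states = C.states + j := by
  show Fintype.card (C.Q ⊕ Fin j) = _
  rw [Fintype.card_sum, Fintype.card_fin]
  rfl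

variable {C}

lemma IL.pad (h : C.IL) (j : ℕ) : (C.pad j).IL := fun x y hxy => by
  simp only [Prod.mk.injEq, pad_output] at hxy
  have hrun : (.inl (C.runFrom C.q0 x) : C.Q ⊕ Fin j) = .inl (C.runFrom C.q0 y) := by
    rw [← pad_runFrom, ← pad_runFrom]
    exact hxy.2
  exact h (Prod.ext hxy.1 (Sum.inl_injective hrun))

lemma IL.exists_states_eq (h : C.IL) {t : ℕ} (ht : C.states ≤ t) :
    ∃ C' : FSC Γ, C'.IL ∧ C'.states = t ∧ ∀ u, C'.output u = C.output u :=
  ⟨C.pad (t - C.states), h.pad _, by rw [pad_states]; omega, C.pad_output _⟩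

variable (C)

lemma sum_length_outFrom_block_le (m : ℕ) (z : List Γ) :
    ∑ i ∈ range (z.length / m),
      (C.outFrom (C.runFrom C.q0 (z.take (i * m))) (block m z i)).length
    ≤ (C.output z).length := by
  have hprefix : ∀ i, (C.output (z.take (i * m))).length = ∑ j ∈ range i,
      (C.outFrom (C.runFrom C.q0 (z.take (j * m))) (block m z j)).length := fun i => by
    induction i with
    | zero => simp [output, outFrom]
    | succ i ih =>
      rw [sum_range_succ, ← ih, take_add_one_mul, output, outFrom_append, List.length_append]
      rfl
  rw [← hprefix]
  conv_rhs => rw [← List.take_append_drop ((z.length / m) * m) z]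
  rw [output, output, outFrom_append, List.length_append]
  omega

variable {C}

lemma IL.card_filter_length_outFrom_eq_le (h : C.IL) (T : Finset (C.Q × List Γ))
    (hreach : ∀ κ ∈ T, ∃ p, C.runFrom C.q0 p = κ.1) (ℓ : ℕ) :
    #{κ ∈ T | (C.outFrom κ.1 κ.2).length = ℓ} ≤ C.states ^ 2 * 2 ^ ℓ := by
  classical
  let f : C.Q × List Γ → C.Q × List Bool × C.Q := fun κ =>
    (κ.1, C.outFrom κ.1 κ.2, C.runFrom κ.1 κ.2)
  have hmaps : ∀ κ ∈ {κ ∈ T | (C.outFrom κ.1 κ.2).length = ℓ},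
      f κ ∈ univ ×ˢ wordsOfLength Bool ℓ ×ˢ univ := fun κ hκ => by
    simpa [f, mem_wordsOfLength] using (mem_filter.1 hκ).2
  have hinj : Set.InjOn f ↑({κ ∈ T | (C.outFrom κ.1 κ.2).length = ℓ} : Finset _) := by
    rintro ⟨q, x⟩ hx ⟨q', y⟩ - hxy
    rw [mem_coe] at hx
    simp only [f, Prod.mk.injEq] at hxy
    obtain ⟨rfl, hout, hrun⟩ := hxy
    obtain ⟨p, rfl⟩ := hreach _ (mem_filter.1 hx).1
    rw [h.eq_of_outFrom_eq p hout hrun]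
  refine (card_le_card_of_injOn f hmaps hinj).trans_eq ?_
  simp only [card_product, card_univ, card_wordsOfLength, Fintype.card_bool, states]
  ring

lemma card_le_of_length_eq [Fintype Γ] (T : Finset (C.Q × List Γ)) {m : ℕ}
    (hlen : ∀ κ ∈ T, κ.2.length = m) : #T ≤ C.states * Fintype.card Γ ^ m := by
  rw [states, ← card_wordsOfLength, ← card_univ, ← card_product]
  exact card_le_card fun κ hκ => mem_product.2 ⟨mem_univ _, mem_wordsOfLength.2 (hlen κ hκ)⟩

lemma IL.sum_filter_length_outFrom_lt_le (h : C.IL) (T : Finset (C.Q × List Γ))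
    (hreach : ∀ κ ∈ T, ∃ p, C.runFrom C.q0 p = κ.1) (L : ℕ) :
    ∑ κ ∈ T with (C.outFrom κ.1 κ.2).length < L, ((2 : ℝ) ^ (C.outFrom κ.1 κ.2).length)⁻¹
      ≤ L * C.states ^ 2 := by
  classical
  set len : C.Q × List Γ → ℕ := fun κ => (C.outFrom κ.1 κ.2).length
  rw [← sum_fiberwise_of_maps_to (t := range L) (g := len)
    (fun κ hκ => mem_range.2 (mem_filter.1 hκ).2)]
  refine (sum_le_sum fun ℓ _ => ?_).trans_eq
    (by rw [sum_const, card_range, nsmul_eq_mul])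
  rw [sum_congr rfl fun κ hκ => congrArg (fun n => ((2 : ℝ) ^ n)⁻¹) (mem_filter.1 hκ).2,
    sum_const, nsmul_eq_mul]
  have hcard : #{κ ∈ {κ ∈ T | len κ < L} | len κ = ℓ} ≤ C.states ^ 2 * 2 ^ ℓ :=
    (card_le_card (monotone_filter_left _ (filter_subset _ _))).trans
      (h.card_filter_length_outFrom_eq_le T hreach ℓ)
  calc (#{κ ∈ {κ ∈ T | len κ < L} | len κ = ℓ} : ℝ) * ((2 : ℝ) ^ ℓ)⁻¹
      ≤ (C.states ^ 2 * 2 ^ ℓ : ℕ) * ((2 : ℝ) ^ ℓ)⁻¹ := by gcongr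
    _ = C.states ^ 2 := by push_cast; field_simp

lemma sum_filter_length_outFrom_ge_le [Fintype Γ] (T : Finset (C.Q × List Γ)) {m : ℕ}
    (hlen : ∀ κ ∈ T, κ.2.length = m) :
    ∑ κ ∈ T with m * Fintype.card Γ ≤ (C.outFrom κ.1 κ.2).length,
      ((2 : ℝ) ^ (C.outFrom κ.1 κ.2).length)⁻¹ ≤ C.states := by
  set L := m * Fintype.card Γ
  have hcard : (#T : ℝ) ≤ C.states * 2 ^ L := by
    exact_mod_cast (card_le_of_length_eq T hlen).trans
      (Nat.mul_le_mul_left _ (pow_le_two_pow_mul _ _))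
  calc ∑ κ ∈ T with L ≤ (C.outFrom κ.1 κ.2).length, ((2 : ℝ) ^ (C.outFrom κ.1 κ.2).length)⁻¹
      ≤ ∑ κ ∈ T, ((2 : ℝ) ^ L)⁻¹ := by
        refine (sum_le_sum fun κ hκ => ?_).trans
          (sum_le_sum_of_subset_of_nonneg (filter_subset _ _) fun _ _ _ => by positivity)
        exact inv_anti₀ (by positivity) (pow_le_pow_right₀ one_le_two (mem_filter.1 hκ).2)
    _ ≤ C.states * 2 ^ L * ((2 : ℝ) ^ L)⁻¹ := by
        rw [sum_const, nsmul_eq_mul]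
        gcongr
    _ = C.states := by field_simp

lemma IL.sum_inv_two_pow_length_outFrom_le [Fintype Γ] (h : C.IL) {m : ℕ} (hm : 1 ≤ m)
    (T : Finset (C.Q × List Γ)) (hreach : ∀ κ ∈ T, ∃ p, C.runFrom C.q0 p = κ.1)
    (hlen : ∀ κ ∈ T, κ.2.length = m) :
    ∑ κ ∈ T, ((2 : ℝ) ^ (C.outFrom κ.1 κ.2).length)⁻¹
      ≤ m * (Fintype.card Γ + 1) * C.states ^ 2 := by
  rw [← sum_filter_add_sum_filter_not T fun κ => (C.outFrom κ.1 κ.2).length < m * Fintype.card Γ]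
  simp only [not_lt]
  have hshort := h.sum_filter_length_outFrom_lt_le T hreach (m * Fintype.card Γ)
  have hlong := sum_filter_length_outFrom_ge_le T hlen (C := C)
  have hr : (1 : ℝ) ≤ C.states := by exact_mod_cast C.one_le_states
  have hm' : (1 : ℝ) ≤ m := by exact_mod_cast hm
  push_cast at hshort
  nlinarith

theorem IL.blockEntropy_le [Fintype Γ] [DecidableEq Γ] (h : C.IL) {m : ℕ} (hm : 1 ≤ m)
    (z : List Γ) :
    blockEntropy m z ≤ (C.output z).length
      + (z.length / m : ℕ) * logb 2 (m * (Fintype.card Γ + 1) * C.states ^ 2) := by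
  classical
  set s := range (z.length / m)
  set key : ℕ → C.Q × List Γ := fun i => (C.runFrom C.q0 (z.take (i * m)), block m z i)
  have hkraft := h.sum_inv_two_pow_length_outFrom_le hm (s.image key)
    (fun κ hκ => by obtain ⟨i, -, rfl⟩ := mem_image.1 hκ; exact ⟨_, rfl⟩)
    (fun κ hκ => by obtain ⟨i, hi, rfl⟩ := mem_image.1 hκ; exact length_block (mem_range.1 hi))
  calc blockEntropy m z ≤ fiberEntropy s key :=
        fiberEntropy_le_of_factors s _ key fun i _ j _ hij => congrArg Prod.snd hij
    _ ≤ ∑ i ∈ s, logb 2 ((2 : ℝ) ^ (C.outFrom (key i).1 (key i).2).length)⁻¹⁻¹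
          + #s * logb 2 (m * (Fintype.card Γ + 1) * C.states ^ 2) :=
        fiberEntropy_le s key _ (fun _ _ => by positivity) hkraft
    _ ≤ (C.output z).length
          + (z.length / m : ℕ) * logb 2 (m * (Fintype.card Γ + 1) * C.states ^ 2) := by
        simp only [inv_inv, logb_pow, logb_self_eq_one one_lt_two, mul_one, card_range, s]
        gcongr
        exact_mod_cast C.sum_length_outFrom_block_le m z

end FSC

noncomputable def blockFSC {Γ : Type} [Finite Γ] (m : ℕ) (hm : 0 < m)
    (code : List Γ → List Bool) : FSC Γ where
  Q := {l : List Γ // l.length < m}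
  fin :=
    have : Finite {l : List Γ // l.length < m} := (List.finite_length_lt Γ m).to_subtype
    Fintype.ofFinite _
  δ q a := if h : q.1.length + 1 < m then ⟨q.1 ++ [a], by simpa using h⟩ else ⟨[], hm⟩
  ν q a := if q.1.length + 1 < m then [] else code (q.1 ++ [a])
  q0 := ⟨[], hm⟩

namespace blockFSC

variable {Γ : Type} [Finite Γ] {m : ℕ} {hm : 0 < m} {code : List Γ → List Bool}

lemma states_eq : (blockFSC m hm code).states = Nat.card {l : List Γ // l.length < m} :=
  Fintype.card_eq_nat_card

lemma runFrom_outFrom_of_lt (q : (blockFSC m hm code).Q) (b : List Γ)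
    (h : q.1.length + b.length < m) :
    ((blockFSC m hm code).runFrom q b).1 = q.1 ++ b ∧ (blockFSC m hm code).outFrom q b = [] := by
  induction b generalizing q with
  | nil => exact ⟨(List.append_nil _).symm, rfl⟩
  | cons a b ih =>
    simp only [List.length_cons] at h
    have := ih ⟨q.1 ++ [a], by simpa using (by omega : q.1.length + 1 < m)⟩
      (by simp only [List.length_append, List.length_singleton]; omega)
    simpa [FSC.runFrom, FSC.outFrom, blockFSC, show q.1.length + 1 < m by omega] using this

lemma runFrom_outFrom_of_eq (q : (blockFSC m hm code).Q) (b : List Γ)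
    (h : q.1.length + b.length = m) :
    ((blockFSC m hm code).runFrom q b).1 = [] ∧
      (blockFSC m hm code).outFrom q b = code (q.1 ++ b) := by
  induction b generalizing q with
  | nil => exact absurd h (by simpa using q.2.ne)
  | cons a b ih =>
    simp only [List.length_cons] at h
    by_cases hlt : q.1.length + 1 < m
    · have := ih ⟨q.1 ++ [a], by simpa using hlt⟩
        (by simp only [List.length_append, List.length_singleton]; omega)
      simpa [FSC.runFrom, FSC.outFrom, blockFSC, hlt] using this
    · obtain rfl : b = [] := List.eq_nil_of_length_eq_zero (by omega)
      simp [FSC.runFrom, FSC.outFrom, blockFSC, hlt]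

lemma runFrom_outFrom_take (z : List Γ) {i : ℕ} (hi : i ≤ z.length / m) :
    ((blockFSC m hm code).runFrom (blockFSC m hm code).q0 (z.take (i * m))).1 = [] ∧
      (blockFSC m hm code).output (z.take (i * m))
        = ((List.range i).map fun j => code (block m z j)).flatten := by
  induction i with
  | zero =>
    rw [zero_mul, List.take_zero]
    exact ⟨rfl, rfl⟩
  | succ i ih =>
    obtain ⟨hrun, hout⟩ := ih (by omega)
    have hblock := runFrom_outFrom_of_eq (hm := hm) (code := code) _ (block m z i)
      (by rw [hrun, length_block (by omega)]; simp)
    rw [hrun, List.nil_append] at hblock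
    rw [take_add_one_mul, FSC.runFrom_append, FSC.output, FSC.outFrom_append, ← FSC.output,
      hout, hblock.2, List.range_succ]
    simpa using hblock.1

lemma output_eq (z : List Γ) :
    (blockFSC m hm code).output z
        = ((List.range (z.length / m)).map fun j => code (block m z j)).flatten ∧
      ((blockFSC m hm code).runFrom (blockFSC m hm code).q0 z).1 = z.drop (z.length / m * m) := by
  obtain ⟨hrun, hout⟩ := runFrom_outFrom_take (hm := hm) (code := code) z le_rfl
  have hrest := runFrom_outFrom_of_lt (hm := hm) (code := code) _ (z.drop (z.length / m * m))
    (by rw [hrun, List.length_drop, List.length_nil, zero_add, ← Nat.mod_eq_sub_div_mul]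
        exact Nat.mod_lt _ hm)
  rw [hrun, List.nil_append] at hrest
  constructor
  · rw [FSC.output, ← List.take_append_drop (z.length / m * m) z, FSC.outFrom_append,
      ← FSC.output, List.take_append_drop, hout, hrest.2, List.append_nil]
  · rw [← hrest.1, ← FSC.runFrom_append, List.take_append_drop]

lemma length_output (z : List Γ) :
    ((blockFSC m hm code).output z).length
      = ∑ i ∈ range (z.length / m), (code (block m z i)).length := by
  rw [(output_eq z).1, List.length_flatten, List.map_map, ← List.toFinset_range,
    List.sum_toFinset _ List.nodup_range]
  rfl

lemma IL (hne : ∀ β : List Γ, β.length = m → code β ≠ [])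
    (hpre : ∀ β γ : List Γ, β.length = m → γ.length = m → code β <+: code γ → β = γ) :
    (blockFSC m hm code).IL := by
  intro x y hxy
  simp only [Prod.mk.injEq] at hxy
  have hblocks : ∀ z : List Γ, ∀ β ∈ (List.range (z.length / m)).map (block m z), β.length = m := by
    intro z β hβ
    obtain ⟨i, hi, rfl⟩ := List.mem_map.1 hβ
    exact length_block (List.mem_range.1 hi)
  have heq := eq_of_flatten_map_eq (s := {β : List Γ | β.length = m}) (fun β hβ => hne β hβ)
    (fun β hβ γ hγ => hpre β γ hβ hγ) (hblocks x) (hblocks y)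
    (by simpa only [List.map_map, Function.comp_def, (output_eq _).1] using hxy.1)
  have hN : x.length / m = y.length / m := by simpa using congrArg List.length heq
  have hdrop : x.drop (x.length / m * m) = y.drop (y.length / m * m) := by
    rw [← (output_eq (hm := hm) (code := code) x).2, ← (output_eq (hm := hm) (code := code) y).2,
      hxy.2]
  rw [← List.take_append_drop (x.length / m * m) x, ← List.take_append_drop (y.length / m * m) y,
    take_mul_eq_flatten, take_mul_eq_flatten, heq, hdrop]

end blockFSC

lemma two_mul_lt_mul_two_pow {N c : ℕ} (hc : 0 < c) : 2 * N < c * 2 ^ (Nat.log 2 (N / c) + 2) := by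
  have h1 : N < c * (N / c + 1) := Nat.lt_mul_div_succ N hc
  have h2 : N / c + 1 ≤ 2 ^ (Nat.log 2 (N / c) + 1) := Nat.lt_pow_succ_log_self one_lt_two _
  calc 2 * N < 2 * (c * (N / c + 1)) := by omega
    _ ≤ 2 * (c * 2 ^ (Nat.log 2 (N / c) + 1)) := by gcongr
    _ = c * 2 ^ (Nat.log 2 (N / c) + 2) := by ring

lemma natLog_div_le_logb {N c : ℕ} (hc : 0 < c) (hcN : c ≤ N) :
    (Nat.log 2 (N / c) : ℝ) ≤ logb 2 (N / c : ℝ) := by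
  have hpos : 0 < N / c := Nat.div_pos hcN hc
  calc (Nat.log 2 (N / c) : ℝ) ≤ logb 2 (N / c : ℕ) := by exact_mod_cast natLog_le_logb _ _
    _ ≤ logb 2 (N / c : ℝ) := logb_le_logb_of_le one_lt_two (by exact_mod_cast hpos) Nat.cast_div_le

section ShannonFano

variable {Γ : Type} [Fintype Γ] [DecidableEq Γ]

/-- Shannon–Fano lengths for the blocks of `w`. The `+ 2`, and the length `m * card Γ + 1` of
the blocks that do not occur in `w`, give each of these two kinds of block total Kraft weight
at most `1 / 2`. -/
noncomputable def shannonLength (m : ℕ) (w β : List Γ) : ℕ :=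
  if β ∈ (range (w.length / m)).image (block m w) then
    Nat.log 2 (w.length / m / #{i ∈ range (w.length / m) | block m w i = β}) + 2
  else m * Fintype.card Γ + 1

lemma one_le_shannonLength (m : ℕ) (w β : List Γ) : 1 ≤ shannonLength m w β := by
  unfold shannonLength; split_ifs <;> omega

lemma shannonLength_block_le {m : ℕ} {w : List Γ} {i : ℕ} (hi : i ∈ range (w.length / m)) :
    (shannonLength m w (block m w i) : ℝ)
      ≤ logb 2 ((w.length / m : ℕ) / #{j ∈ range (w.length / m) | block m w j = block m w i})
        + 2 := by
  rw [shannonLength, if_pos (mem_image_of_mem _ hi)]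
  push_cast
  gcongr
  exact natLog_div_le_logb (card_fiber_pos hi) ((card_filter_le _ _).trans_eq (card_range _))

lemma sum_image_block_inv_two_pow_shannonLength_le (m : ℕ) (w : List Γ) :
    ∑ β ∈ (range (w.length / m)).image (block m w), ((2 : ℝ) ^ shannonLength m w β)⁻¹ ≤ 1 / 2 := by
  set N := w.length / m
  set cnt : List Γ → ℕ := fun β => #{i ∈ range N | block m w i = β}
  rcases Nat.eq_zero_or_pos N with hN | hN
  · simp [N, hN]
  have hterm : ∀ β ∈ (range N).image (block m w),
      ((2 : ℝ) ^ shannonLength m w β)⁻¹ ≤ cnt β / (2 * N) := by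
    intro β hβ
    obtain ⟨i, hi, rfl⟩ := mem_image.1 hβ
    have hc : 0 < cnt (block m w i) := card_fiber_pos hi
    rw [shannonLength, if_pos hβ, inv_le_iff_one_le_mul₀ (by positivity),
      div_mul_eq_mul_div, one_le_div (by positivity)]
    exact_mod_cast (two_mul_lt_mul_two_pow hc).le
  calc ∑ β ∈ (range N).image (block m w), ((2 : ℝ) ^ shannonLength m w β)⁻¹
      ≤ ∑ β ∈ (range N).image (block m w), (cnt β : ℝ) / (2 * N) := sum_le_sum hterm
    _ = 1 / 2 := by
      rw [← sum_div, ← Nat.cast_sum, ← card_eq_sum_card_image, card_range]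
      field_simp

lemma sum_filter_not_mem_inv_two_pow_shannonLength_le (m : ℕ) (w : List Γ) :
    ∑ β ∈ wordsOfLength Γ m with β ∉ (range (w.length / m)).image (block m w),
      ((2 : ℝ) ^ shannonLength m w β)⁻¹ ≤ 1 / 2 := by
  set L := m * Fintype.card Γ
  set W := {β ∈ wordsOfLength Γ m | β ∉ (range (w.length / m)).image (block m w)}
  have hterm : ∀ β ∈ W, ((2 : ℝ) ^ shannonLength m w β)⁻¹ = ((2 : ℝ) ^ (L + 1))⁻¹ :=
    fun β hβ => by rw [shannonLength, if_neg (mem_filter.1 hβ).2]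
  have hcard : (#W : ℝ) ≤ 2 ^ L := by
    exact_mod_cast ((card_filter_le _ _).trans_eq (card_wordsOfLength Γ m)).trans
      (pow_le_two_pow_mul _ _)
  rw [sum_congr rfl hterm, sum_const, nsmul_eq_mul]
  calc (#W : ℝ) * ((2 : ℝ) ^ (L + 1))⁻¹ ≤ 2 ^ L * ((2 : ℝ) ^ (L + 1))⁻¹ := by gcongr
    _ = 1 / 2 := by rw [pow_succ]; field_simp

lemma sum_inv_two_pow_shannonLength_le_one (m : ℕ) (w : List Γ) :
    ∑ β ∈ wordsOfLength Γ m, ((2 : ℝ) ^ shannonLength m w β)⁻¹ ≤ 1 := by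
  set O := (range (w.length / m)).image (block m w)
  rw [← sum_filter_add_sum_filter_not _ (· ∈ O)]
  have hsub : ∑ β ∈ wordsOfLength Γ m with β ∈ O, ((2 : ℝ) ^ shannonLength m w β)⁻¹
      ≤ ∑ β ∈ O, ((2 : ℝ) ^ shannonLength m w β)⁻¹ :=
    sum_le_sum_of_subset_of_nonneg (fun β hβ => (mem_filter.1 hβ).2) fun _ _ _ => by positivity
  linarith [sum_image_block_inv_two_pow_shannonLength_le m w,
    sum_filter_not_mem_inv_two_pow_shannonLength_le m w]

theorem exists_IL_length_output_le {m : ℕ} (hm : 1 ≤ m) (w : List Γ) :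
    ∃ C : FSC Γ, C.IL ∧ C.states = Nat.card {l : List Γ // l.length < m} ∧
      (C.output w).length ≤ blockEntropy m w + 2 * (w.length / m : ℕ) := by
  obtain ⟨code, hlen, hpre⟩ :=
    exists_prefixFree_code _ _ (sum_inv_two_pow_shannonLength_le_one m w)
  refine ⟨blockFSC m hm code, blockFSC.IL (fun β _ h => ?_) (fun β γ hβ hγ => ?_),
    blockFSC.states_eq, ?_⟩
  · have := one_le_shannonLength m w β
    rw [← hlen, h, List.length_nil] at this
    omega
  · exact hpre β (mem_wordsOfLength.2 hβ) γ (mem_wordsOfLength.2 hγ)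
  calc (((blockFSC m hm code).output w).length : ℝ)
      = ∑ i ∈ range (w.length / m), (shannonLength m w (block m w i) : ℝ) := by
        simp [blockFSC.length_output, hlen]
    _ ≤ ∑ i ∈ range (w.length / m), (logb 2 ((w.length / m : ℕ)
          / #{j ∈ range (w.length / m) | block m w j = block m w i}) + 2) :=
        sum_le_sum fun i hi => shannonLength_block_le hi
    _ = blockEntropy m w + 2 * (w.length / m : ℕ) := by
        rw [sum_add_distrib, sum_const, card_range, nsmul_eq_mul, mul_comm]
        simp only [blockEntropy, fiberEntropy, card_range]

end ShannonFano

lemma exists_IL_states_eq_one (Γ : Type) [Fintype Γ] :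
    ∃ C : FSC Γ, C.IL ∧ C.states = 1 ∧
      ∀ u : List Γ, (C.output u).length = u.length * (Fintype.card Γ + 1) := by
  have hkraft : ∑ β ∈ wordsOfLength Γ 1, ((2 : ℝ) ^ (Fintype.card Γ + 1))⁻¹ ≤ 1 := by
    rw [sum_const, card_wordsOfLength, pow_one, nsmul_eq_mul, ← div_eq_mul_inv,
      div_le_one (by positivity), pow_succ]
    have : (Fintype.card Γ : ℝ) ≤ 2 ^ Fintype.card Γ := by exact_mod_cast Nat.lt_two_pow_self.le
    linarith
  obtain ⟨code, hlen, hpre⟩ := exists_prefixFree_code _ _ hkraft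
  refine ⟨blockFSC 1 one_pos code, blockFSC.IL (fun β _ h => by simpa [h] using hlen β)
    (fun β γ hβ hγ => hpre β (mem_wordsOfLength.2 hβ) γ (mem_wordsOfLength.2 hγ)), ?_,
    fun u => by simp [blockFSC.length_output, hlen]⟩
  rw [blockFSC.states_eq, Nat.card_eq_one_iff_exists]
  exact ⟨⟨[], one_pos⟩, fun l => Subtype.ext (List.eq_nil_of_length_eq_zero (by omega))⟩

/-- `rhoFS` and `rhoFSJoint` are both of this form (`rhoFS_eq`, `rhoFSJoint_eq`). -/
noncomputable def bestRatio (Γ : Type) (t : ℕ) (z : List Γ) (d : ℝ) : ℝ :=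
  sInf {x : ℝ | ∃ C : FSC Γ, C.IL ∧ C.states = t ∧ x = (C.output z).length / d}

section BestRatio

variable {Γ : Type} {t : ℕ} {z : List Γ} {d : ℝ}

lemma bestRatio_nonneg (hd : 0 ≤ d) : 0 ≤ bestRatio Γ t z d :=
  Real.sInf_nonneg fun _ ⟨_, _, _, hx⟩ => hx ▸ by positivity

lemma bestRatio_le (hd : 0 ≤ d) {C : FSC Γ} (hC : C.IL) (ht : C.states ≤ t) :
    bestRatio Γ t z d ≤ (C.output z).length / d := by
  obtain ⟨C', hC', hst, hout⟩ := hC.exists_states_eq ht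
  refine csInf_le ⟨0, fun _ ⟨_, _, _, hx⟩ => hx ▸ by positivity⟩ ⟨C', hC', hst, ?_⟩
  rw [hout]

variable [Fintype Γ]

lemma le_bestRatio (ht : 1 ≤ t) {b : ℝ}
    (h : ∀ C : FSC Γ, C.IL → C.states = t → b ≤ (C.output z).length / d) :
    b ≤ bestRatio Γ t z d := by
  obtain ⟨C, hC, hst, -⟩ := exists_IL_states_eq_one Γ
  obtain ⟨C', hC', hst', -⟩ := hC.exists_states_eq (hst.trans_le ht)
  exact le_csInf ⟨_, C', hC', hst', rfl⟩ fun _ ⟨D, hD, hDt, hx⟩ => hx ▸ h D hD hDt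

lemma bestRatio_anti (hd : 0 ≤ d) (ht : 1 ≤ t) {t' : ℕ} (htt' : t ≤ t') :
    bestRatio Γ t' z d ≤ bestRatio Γ t z d :=
  le_bestRatio ht fun _ hC hCt => bestRatio_le hd hC (hCt.trans_le htt')

lemma bestRatio_le_length_mul (hd : 0 ≤ d) :
    bestRatio Γ t z d ≤ z.length * (Fintype.card Γ + 1) / d := by
  rcases Nat.eq_zero_or_pos t with rfl | ht
  · have hempty : {x : ℝ | ∃ C : FSC Γ, C.IL ∧ C.states = 0 ∧ x = (C.output z).length / d} = ∅ :=
      Set.eq_empty_of_forall_notMem fun x ⟨C, _, h0, _⟩ => by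
        have := C.one_le_states
        omega
    rw [bestRatio, hempty, Real.sInf_empty]
    positivity
  obtain ⟨C, hC, hst, hout⟩ := exists_IL_states_eq_one Γ
  refine (bestRatio_le hd hC (hst.trans_le ht)).trans_eq ?_
  rw [hout]
  push_cast
  rfl

end BestRatio

lemma natCast_div_div_le (n m : ℕ) : ((n / m : ℕ) : ℝ) / n ≤ 1 / m := by
  rcases Nat.eq_zero_or_pos n with rfl | hn
  · simp
  calc ((n / m : ℕ) : ℝ) / n ≤ ((n : ℝ) / m) / n := by gcongr; exact Nat.cast_div_le
    _ = 1 / m := by field_simp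

lemma natCast_mul_div_le {n' n : ℕ} (h : n' ≤ n) {c L : ℝ} (hc : 0 ≤ c) (hL : 0 ≤ L) :
    n' * c / (n * L) ≤ c / L := by
  rcases Nat.eq_zero_or_pos n with rfl | hn
  · rw [Nat.le_zero.1 h, Nat.cast_zero, zero_mul, zero_div]
    positivity
  calc n' * c / (n * L) ≤ n * c / (n * L) := by gcongr
    _ = c / L := mul_div_mul_left _ _ (by positivity)

lemma logb_natCast_nonneg (n : ℕ) : 0 ≤ logb 2 (n : ℝ) :=
  div_nonneg (log_natCast_nonneg n) (log_nonneg one_le_two)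

lemma tendsto_const_add_logb_mul_div (a c L : ℝ) (hc : 0 < c) :
    Tendsto (fun m : ℕ => (a + logb 2 (m * c)) / (m * L)) atTop (𝓝 0) := by
  have hinv : Tendsto (fun m : ℕ => (a + logb 2 c) * (1 / (m : ℝ))) atTop (𝓝 0) := by
    simpa using (tendsto_one_div_atTop_nhds_zero_nat (𝕜 := ℝ)).const_mul (a + logb 2 c)
  have hlog : Tendsto (fun m : ℕ => log m / m / log 2) atTop (𝓝 0) := by
    have := (tendsto_pow_log_div_mul_add_atTop 1 0 1 one_ne_zero).comp
      tendsto_natCast_atTop_atTop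
    simpa using this.div_const (log 2)
  have := (hinv.add hlog).div_const L
  rw [add_zero, zero_div] at this
  refine this.congr' ?_
  filter_upwards [eventually_ge_atTop 1] with m hm
  have hm' : (0 : ℝ) < m := by exact_mod_cast hm
  rw [logb_mul hm'.ne' hc.ne', logb, logb]
  field_simp
  ring

section Liminf

variable {f g : ℕ → ℝ} {a b : ℝ}

lemma liminf_mem_Icc (h : ∀ n, f n ∈ Set.Icc a b) : liminf f atTop ∈ Set.Icc a b :=
  ⟨le_liminf_of_le (isBoundedUnder_of ⟨b, fun n => (h n).2⟩).isCoboundedUnder_ge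
      (Eventually.of_forall fun n => (h n).1),
    liminf_le_of_le (isBoundedUnder_of ⟨a, fun n => (h n).1⟩)
      fun _ hc => (hc.exists).choose_spec.trans (h _).2⟩

lemma liminf_le_liminf_of_forall_le (hf : ∀ n, a ≤ f n) (hg : ∀ n, g n ≤ b)
    (h : ∀ n, f n ≤ g n) : liminf f atTop ≤ liminf g atTop :=
  liminf_le_liminf (Eventually.of_forall h) (isBoundedUnder_of ⟨a, hf⟩)
    (isBoundedUnder_of ⟨b, hg⟩).isCoboundedUnder_ge

lemma liminf_add_const_of_mem_Icc (hf : ∀ n, f n ∈ Set.Icc a b) (c : ℝ) :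
    liminf (fun n => f n + c) atTop = liminf f atTop + c :=
  liminf_add_const _ _ _ (isBoundedUnder_of ⟨b, fun n => (hf n).2⟩).isCoboundedUnder_ge
    (isBoundedUnder_of ⟨a, fun n => (hf n).1⟩)

lemma tendsto_limUnder_of_antitone_add_one (hf : Antitone fun t => f (t + 1))
    (hb : ∀ t, a ≤ f t) : Tendsto f atTop (𝓝 (limUnder atTop f)) :=
  tendsto_nhds_limUnder ⟨_, (tendsto_add_atTop_iff_nat 1).1
    (tendsto_atTop_ciInf hf ⟨a, Set.forall_mem_range.2 fun t => hb (t + 1)⟩)⟩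

lemma tendsto_limUnder_of_monotone_add_one (hf : Monotone fun t => f (t + 1))
    (hb : ∀ t, f t ≤ b) : Tendsto f atTop (𝓝 (limUnder atTop f)) :=
  tendsto_nhds_limUnder ⟨_, (tendsto_add_atTop_iff_nat 1).1
    (tendsto_atTop_ciSup hf ⟨b, Set.forall_mem_range.2 fun t => hb (t + 1)⟩)⟩

end Liminf

section Rho

variable {k : Type} [Fintype k]

lemma rhoFS_eq (t : ℕ) (u : List k) :
    rhoFS k t u = bestRatio k t u (u.length * logb 2 (Fintype.card k)) := rfl

lemma rhoFSJoint_eq (r : ℕ) (u w : List k) :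
    rhoFSJoint k r u w = bestRatio (k × k) r (u.zip w) (u.length * logb 2 (Fintype.card k)) :=
  rfl

lemma length_mul_logb_card_nonneg (u : List k) : 0 ≤ u.length * logb 2 (Fintype.card k) :=
  mul_nonneg (Nat.cast_nonneg _) (logb_natCast_nonneg _)

lemma rhoFS_le_blockEntropy [DecidableEq k] {t m : ℕ} (hm : 1 ≤ m)
    (ht : Nat.card {l : List k // l.length < m} ≤ t) (x : List k) :
    rhoFS k t x ≤ (blockEntropy m x + 2 * (x.length / m : ℕ))
      / (x.length * logb 2 (Fintype.card k)) := by
  obtain ⟨C, hC, hCst, hCout⟩ := exists_IL_length_output_le hm x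
  exact (bestRatio_le (length_mul_logb_card_nonneg x) hC (hCst ▸ ht)).trans
    (div_le_div_of_nonneg_right hCout (length_mul_logb_card_nonneg x))

lemma blockEntropy_sub_le_rhoFSJoint [DecidableEq k] {r m : ℕ} (hr : 1 ≤ r) (hm : 1 ≤ m)
    {u w : List k} (hlen : u.length = w.length) :
    (blockEntropy m (u.zip w)
        - (u.length / m : ℕ) * logb 2 (m * (Fintype.card k ^ 2 + 1) * r ^ 2))
      / (u.length * logb 2 (Fintype.card k)) ≤ rhoFSJoint k r u w := by
  refine le_bestRatio hr fun D hD hDst =>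
    div_le_div_of_nonneg_right ?_ (length_mul_logb_card_nonneg u)
  have := hD.blockEntropy_le hm (u.zip w)
  rw [List.length_zip, ← hlen, min_self, hDst, Fintype.card_prod] at this
  push_cast at this
  rw [← sq] at this
  linarith

theorem rhoFS_sub_rhoFSJoint_le [DecidableEq k] {r t m : ℕ} (hr : 1 ≤ r) (hm : 1 ≤ m)
    (ht : Nat.card {l : List k // l.length < m} ≤ t) {u w x : List k}
    (hlen : u.length = w.length) (hx : x.length = u.length)
    (hH : blockEntropy m x ≤ blockEntropy m (u.zip w)) :
    rhoFS k t x - rhoFSJoint k r u w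
      ≤ (2 + logb 2 (m * (Fintype.card k ^ 2 + 1) * r ^ 2)) / (m * logb 2 (Fintype.card k)) := by
  set n := u.length
  set L := logb 2 (Fintype.card k)
  set B := logb 2 (m * (Fintype.card k ^ 2 + 1) * r ^ 2)
  have hB : 0 ≤ B := logb_nonneg one_lt_two <| by
    exact_mod_cast mul_pos (mul_pos hm (Nat.succ_pos _)) (pow_pos hr 2)
  have hup := rhoFS_le_blockEntropy (t := t) hm ht x
  rw [hx] at hup
  have hlow := blockEntropy_sub_le_rhoFSJoint hr hm hlen
  calc rhoFS k t x - rhoFSJoint k r u w ≤ (n / m : ℕ) * (2 + B) / (n * L) := by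
        refine (sub_le_sub hup hlow).trans ?_
        rw [← sub_div]
        exact div_le_div_of_nonneg_right (by linarith) (length_mul_logb_card_nonneg u)
    _ = ((n / m : ℕ) / n) * ((2 + B) / L) := by ring
    _ ≤ (1 / m) * ((2 + B) / L) :=
        mul_le_mul_of_nonneg_right (natCast_div_div_le n m)
          (div_nonneg (by linarith) (logb_natCast_nonneg _))
    _ = (2 + B) / (m * L) := by ring

theorem rhoFSMutual_le_min_add {r t m : ℕ} (hr : 1 ≤ r) (hm : 1 ≤ m)
    (ht : Nat.card {l : List k // l.length < m} ≤ t) {u w : List k}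
    (hlen : u.length = w.length) :
    rhoFSMutual k r t u w ≤ min (rhoFS k t u) (rhoFS k t w)
      + (2 + logb 2 (m * (Fintype.card k ^ 2 + 1) * r ^ 2)) / (m * logb 2 (Fintype.card k)) := by
  classical
  have hu : blockEntropy m u ≤ blockEntropy m (u.zip w) := by
    conv_lhs => rw [← List.map_fst_zip hlen.le]
    exact blockEntropy_map_le _ _ _
  have hw : blockEntropy m w ≤ blockEntropy m (u.zip w) := by
    conv_lhs => rw [← List.map_snd_zip hlen.ge]
    exact blockEntropy_map_le _ _ _
  have h1 := rhoFS_sub_rhoFSJoint_le hr hm ht hlen rfl hu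
  have h2 := rhoFS_sub_rhoFSJoint_le hr hm ht hlen hlen.symm hw
  rw [rhoFSMutual, ← min_add_add_right]
  exact le_min (by linarith) (by linarith)

lemma rhoFS_mem_Icc (t : ℕ) (u : List k) :
    rhoFS k t u ∈ Set.Icc 0 ((Fintype.card k + 1) / logb 2 (Fintype.card k)) :=
  ⟨bestRatio_nonneg (length_mul_logb_card_nonneg u),
    (bestRatio_le_length_mul (length_mul_logb_card_nonneg u)).trans
      (natCast_mul_div_le le_rfl (by positivity) (logb_natCast_nonneg _))⟩

lemma rhoFSJoint_mem_Icc (r : ℕ) (u w : List k) :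
    rhoFSJoint k r u w ∈ Set.Icc 0 ((Fintype.card k ^ 2 + 1) / logb 2 (Fintype.card k)) := by
  refine ⟨bestRatio_nonneg (length_mul_logb_card_nonneg u),
    (bestRatio_le_length_mul (length_mul_logb_card_nonneg u)).trans ?_⟩
  rw [Fintype.card_prod, Nat.cast_mul, ← sq]
  exact natCast_mul_div_le ((List.length_zip ..).trans_le (min_le_left _ _)) (by positivity)
    (logb_natCast_nonneg _)

lemma rhoFSMutual_mem_Icc (r t : ℕ) (u w : List k) :
    rhoFSMutual k r t u w ∈ Set.Icc (-((Fintype.card k ^ 2 + 1) / logb 2 (Fintype.card k)))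
      (2 * ((Fintype.card k + 1) / logb 2 (Fintype.card k))) := by
  have hu := rhoFS_mem_Icc t u
  have hw := rhoFS_mem_Icc t w
  have huw := rhoFSJoint_mem_Icc r u w
  constructor <;> simp only [rhoFSMutual, Set.mem_Icc] at * <;> linarith

lemma rhoFSMutual_anti_right {r t t' : ℕ} (ht : 1 ≤ t) (h : t ≤ t') (u w : List k) :
    rhoFSMutual k r t' u w ≤ rhoFSMutual k r t u w := by
  have hu := bestRatio_anti (z := u) (length_mul_logb_card_nonneg u) ht h
  have hw := bestRatio_anti (z := w) (length_mul_logb_card_nonneg w) ht h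
  rw [rhoFSMutual, rhoFSMutual, rhoFS_eq, rhoFS_eq, rhoFS_eq, rhoFS_eq]
  linarith

lemma rhoFSMutual_mono_left {r r' t : ℕ} (hr : 1 ≤ r) (h : r ≤ r') (u w : List k) :
    rhoFSMutual k r t u w ≤ rhoFSMutual k r' t u w := by
  have := bestRatio_anti (z := u.zip w) (length_mul_logb_card_nonneg u) hr h
  rw [rhoFSMutual, rhoFSMutual, rhoFSJoint_eq, rhoFSJoint_eq]
  linarith

end Rho

section Dimension

variable {k : Type} [Fintype k]

lemma tendsto_dimFS (S : ℕ → k) :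
    Tendsto (fun t => liminf (fun n => rhoFS k t (pre S n)) atTop) atTop (𝓝 (dimFS k S)) :=
  tendsto_limUnder_of_antitone_add_one
    (fun t t' h => liminf_le_liminf_of_forall_le (fun n => (rhoFS_mem_Icc _ _).1)
      (fun n => (rhoFS_mem_Icc _ _).2) fun n =>
        bestRatio_anti (length_mul_logb_card_nonneg _) (by omega) (by omega))
    fun t => (liminf_mem_Icc fun n => rhoFS_mem_Icc t (pre S n)).1

lemma tendsto_liminf_rhoFSMutual (S T : ℕ → k) (r : ℕ) :
    Tendsto (fun t => liminf (fun n => rhoFSMutual k r t (pre S n) (pre T n)) atTop) atTop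
      (𝓝 (limUnder atTop fun t => liminf (fun n => rhoFSMutual k r t (pre S n) (pre T n)) atTop)) :=
  tendsto_limUnder_of_antitone_add_one
    (fun t t' h => liminf_le_liminf_of_forall_le (fun n => (rhoFSMutual_mem_Icc _ _ _ _).1)
      (fun n => (rhoFSMutual_mem_Icc _ _ _ _).2)
      fun n => rhoFSMutual_anti_right (by omega) (by omega) _ _)
    fun t => (liminf_mem_Icc fun n => rhoFSMutual_mem_Icc r t (pre S n) (pre T n)).1

lemma tendsto_mdimFS (S T : ℕ → k) :
    Tendsto (fun r => limUnder atTop fun t =>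
      liminf (fun n => rhoFSMutual k r t (pre S n) (pre T n)) atTop) atTop (𝓝 (mdimFS k S T)) :=
  tendsto_limUnder_of_monotone_add_one
    (fun r r' h => le_of_tendsto_of_tendsto' (tendsto_liminf_rhoFSMutual S T _)
      (tendsto_liminf_rhoFSMutual S T _) fun t => liminf_le_liminf_of_forall_le
        (fun n => (rhoFSMutual_mem_Icc _ _ _ _).1) (fun n => (rhoFSMutual_mem_Icc _ _ _ _).2)
        fun n => rhoFSMutual_mono_left (by omega) (by omega) _ _)
    fun r => le_of_tendsto' (tendsto_liminf_rhoFSMutual S T r)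
      fun t => (liminf_mem_Icc fun n => rhoFSMutual_mem_Icc r t (pre S n) (pre T n)).2

lemma eventually_liminf_rhoFSMutual_le (S T : ℕ → k) {r : ℕ} (hr : 1 ≤ r) {ε : ℝ} (hε : 0 < ε) :
    ∀ᶠ t in atTop, liminf (fun n => rhoFSMutual k r t (pre S n) (pre T n)) atTop
      ≤ min (liminf (fun n => rhoFS k t (pre S n)) atTop)
          (liminf (fun n => rhoFS k t (pre T n)) atTop) + ε := by
  obtain ⟨m, hpen, hm⟩ := ((tendsto_const_add_logb_mul_div 2 ((Fintype.card k ^ 2 + 1) * r ^ 2)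
    (logb 2 (Fintype.card k)) (by positivity)).eventually (ge_mem_nhds hε)).and
    (eventually_ge_atTop 1) |>.exists
  filter_upwards [eventually_ge_atTop (Nat.card {l : List k // l.length < m})] with t ht
  have hpt : ∀ n, rhoFSMutual k r t (pre S n) (pre T n)
      ≤ min (rhoFS k t (pre S n)) (rhoFS k t (pre T n)) + ε := fun n => by
    refine (rhoFSMutual_le_min_add hr hm ht (by simp [pre])).trans ?_
    rw [mul_assoc (m : ℝ)]
    gcongr
  have hlim : ∀ x : ℕ → k, (∀ n, rhoFSMutual k r t (pre S n) (pre T n) ≤ rhoFS k t (pre x n) + ε) →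
      liminf (fun n => rhoFSMutual k r t (pre S n) (pre T n)) atTop
        ≤ liminf (fun n => rhoFS k t (pre x n)) atTop + ε := fun x hx =>
    (liminf_le_liminf_of_forall_le (fun n => (rhoFSMutual_mem_Icc _ _ _ _).1)
      (fun n => add_le_add_left (rhoFS_mem_Icc t (pre x n)).2 ε) hx).trans_eq
      (liminf_add_const_of_mem_Icc (fun n => rhoFS_mem_Icc t (pre x n)) ε)
  rw [← min_add_add_right]
  exact le_min (hlim S fun n => (hpt n).trans (by gcongr; exact min_le_left _ _))
    (hlim T fun n => (hpt n).trans (by gcongr; exact min_le_right _ _))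

end Dimension

theorem mdimFS_le_min_general {k : Type} [Fintype k] (S T : ℕ → k) :
    mdimFS k S T ≤ min (dimFS k S) (dimFS k T) := by
  refine le_of_tendsto (tendsto_mdimFS S T) ((eventually_ge_atTop 1).mono fun r hr => ?_)
  exact le_of_forall_pos_le_add fun ε hε => le_of_tendsto_of_tendsto
    (tendsto_liminf_rhoFSMutual S T r) (((tendsto_dimFS S).min (tendsto_dimFS T)).add_const ε)
    (eventually_liminf_rhoFSMutual_le S T hr hε)

/-- `mdim_FS(S:T) ≤ min{dim_FS(S), dim_FS(T)}`. -/
theorem mdimFS_le_min {k : Type} [Fintype k] (hk : 2 ≤ Fintype.card k)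
    (S T : ℕ → k) :
    mdimFS k S T ≤ min (dimFS k S) (dimFS k T) :=
  mdimFS_le_min_general S T
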